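/- If a representation z_t preserves autoinformation at lag τ (AIG(z_t; τ) = 0), then z_t is sufficient for every noisy function y_{t+τ} = f(x_{t+τ}, ε) of the future state: I(x_t; y_{t+τ}) = I(z_t; y_{t+τ}). -/

import Mathlib

/-!
Write `H(X) = -∑ ω, μ ω * log P(X = X ω)`; mutual and conditional mutual information are
signed sums of such entropies, so chain rules only rearrange tuples, and conditional mutual
information is nonnegative by Gibbs' inequality. Because `z = g(x, ε₁)` and `z' = g(x', ε₂)` add
fresh noise, `z' — x' — z` and `x' — x — z` are Markov chains, hence
`I(z; z') ≤ I(z; x') ≤ I(x; x')`. Preserved autoinformation makes both inequalities equalities,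
which forces `I(x; x' | z) = 0`; as `y = f(x', ε₃)` with fresh `ε₃`, also `I(x; y | z) = 0`.
Finally `y — x — z` is Markov, so `I(x; y) = I(z; y) + I(x; y | z) = I(z; y)`.
-/

open Finset

/-- Probability mass function of a random variable `X : Ω → α` under the weight `μ`. -/
def pmfOf {Ω α : Type} [Fintype Ω] [DecidableEq α] (μ : Ω → ℝ) (X : Ω → α) (a : α) : ℝ :=
  ∑ ω ∈ Finset.univ.filter (fun ω => X ω = a), μ ω

/-- `μ` is a probability mass function on the finite sample space `Ω`. -/
def IsPMF {Ω : Type} [Fintype Ω] (μ : Ω → ℝ) : Prop :=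
  (∀ ω, 0 ≤ μ ω) ∧ ∑ ω, μ ω = 1

/-- Mutual information `I(X; Y)` of two finite-valued random variables. -/
noncomputable def mi {Ω α β : Type} [Fintype Ω] [Fintype α] [DecidableEq α]
    [Fintype β] [DecidableEq β] (μ : Ω → ℝ) (X : Ω → α) (Y : Ω → β) : ℝ :=
  ∑ a : α, ∑ b : β,
    pmfOf μ (fun ω => (X ω, Y ω)) (a, b) *
      Real.log (pmfOf μ (fun ω => (X ω, Y ω)) (a, b) / (pmfOf μ X a * pmfOf μ Y b))

/-- Conditional mutual information `I(X; Y | Z)` of finite-valued random variables. -/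
noncomputable def cmi {Ω α β γ : Type} [Fintype Ω] [Fintype α] [DecidableEq α]
    [Fintype β] [DecidableEq β] [Fintype γ] [DecidableEq γ]
    (μ : Ω → ℝ) (X : Ω → α) (Y : Ω → β) (Z : Ω → γ) : ℝ :=
  ∑ a : α, ∑ b : β, ∑ c : γ,
    pmfOf μ (fun ω => (X ω, Y ω, Z ω)) (a, b, c) *
      Real.log (pmfOf μ (fun ω => (X ω, Y ω, Z ω)) (a, b, c) * pmfOf μ Z c /
        (pmfOf μ (fun ω => (X ω, Z ω)) (a, c) * pmfOf μ (fun ω => (Y ω, Z ω)) (b, c)))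

/-- Conditional pmf `P(X = a | Y = b)`. -/
noncomputable def condPMF {Ω α β : Type} [Fintype Ω] [DecidableEq α] [DecidableEq β]
    (μ : Ω → ℝ) (X : Ω → α) (Y : Ω → β) (a : α) (b : β) : ℝ :=
  pmfOf μ (fun ω => (X ω, Y ω)) (a, b) / pmfOf μ Y b

/-- Independence of two finite-valued random variables. -/
def IndepRV {Ω α β : Type} [Fintype Ω] [Fintype α] [DecidableEq α]
    [Fintype β] [DecidableEq β] (μ : Ω → ℝ) (X : Ω → α) (Y : Ω → β) : Prop :=
  ∀ a b, pmfOf μ (fun ω => (X ω, Y ω)) (a, b) = pmfOf μ X a * pmfOf μ Y b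

section PmfOf

variable {Ω α β : Type} [Fintype Ω] [DecidableEq α] [DecidableEq β] (μ : Ω → ℝ)

lemma pmfOf_nonneg (hμ : ∀ ω, 0 ≤ μ ω) (X : Ω → α) (a : α) : 0 ≤ pmfOf μ X a :=
  Finset.sum_nonneg fun ω _ => hμ ω

lemma pmfOf_pos_of_pos (hμ : ∀ ω, 0 ≤ μ ω) (X : Ω → α) {ω : Ω} (hω : 0 < μ ω) :
    0 < pmfOf μ X (X ω) :=
  hω.trans_le <| Finset.single_le_sum (fun ω _ => hμ ω) (by simp)

lemma exists_pos_of_pmfOf_pos {X : Ω → α} {a : α} (h : 0 < pmfOf μ X a) :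
    ∃ ω, X ω = a ∧ 0 < μ ω := by
  by_contra! hneg
  exact h.not_ge <| Finset.sum_nonpos fun ω hω => hneg ω (Finset.mem_filter.1 hω).2

lemma pmfOf_congr {X : Ω → α} {Y : Ω → β} {a : α} {b : β} (h : ∀ ω, X ω = a ↔ Y ω = b) :
    pmfOf μ X a = pmfOf μ Y b := by
  simp only [pmfOf, h]

lemma sum_pmfOf_mul [Fintype α] (X : Ω → α) (F : α → ℝ) :
    ∑ a, pmfOf μ X a * F a = ∑ ω, μ ω * F (X ω) := by
  simp only [pmfOf, Finset.sum_mul]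
  rw [← Finset.sum_fiberwise Finset.univ X (fun ω => μ ω * F (X ω))]
  refine Finset.sum_congr rfl fun a _ => Finset.sum_congr rfl fun ω hω => ?_
  rw [(Finset.mem_filter.1 hω).2]

lemma pmfOf_comp [Fintype α] (X : Ω → α) (φ : α → β) (c : β) :
    pmfOf μ (fun ω => φ (X ω)) c = ∑ a, pmfOf μ X a * if φ a = c then 1 else 0 := by
  rw [sum_pmfOf_mul]
  simp [pmfOf, Finset.sum_filter]

lemma sum_pmfOf [Fintype α] (X : Ω → α) : ∑ a, pmfOf μ X a = ∑ ω, μ ω := by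
  simpa using sum_pmfOf_mul μ X 1

lemma sum_pmfOf_pair [Fintype α] (X : Ω → α) (Y : Ω → β) (b : β) :
    ∑ a, pmfOf μ (fun ω => (X ω, Y ω)) (a, b) = pmfOf μ Y b := by
  simp only [pmfOf, Prod.mk.injEq]
  rw [← Finset.sum_fiberwise (Finset.univ.filter fun ω => Y ω = b) X μ]
  simp only [Finset.filter_filter, and_comm]

end PmfOf

noncomputable def entropy {Ω α : Type} [Fintype Ω] [DecidableEq α] (μ : Ω → ℝ) (X : Ω → α) :
    ℝ :=
  -∑ ω, μ ω * Real.log (pmfOf μ X (X ω))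

section Entropy

variable {Ω α β γ δ : Type} [Fintype Ω] [DecidableEq α] [DecidableEq β] [DecidableEq γ]
  [DecidableEq δ] (μ : Ω → ℝ)

lemma entropy_congr {X : Ω → α} {Y : Ω → β} (h : ∀ ω ω', X ω' = X ω ↔ Y ω' = Y ω) :
    entropy μ X = entropy μ Y := by
  simp only [entropy, pmfOf_congr μ (h _)]

variable (hμ : ∀ ω, 0 ≤ μ ω)
include hμ

lemma mi_eq_entropy [Fintype α] [Fintype β] (X : Ω → α) (Y : Ω → β) :
    mi μ X Y = entropy μ X + entropy μ Y - entropy μ (fun ω => (X ω, Y ω)) := by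
  have lotus := sum_pmfOf_mul μ (fun ω => (X ω, Y ω))
    fun t => Real.log (pmfOf μ (fun ω => (X ω, Y ω)) t / (pmfOf μ X t.1 * pmfOf μ Y t.2))
  rw [Fintype.sum_prod_type] at lotus
  rw [mi, lotus]
  simp only [entropy, sub_eq_add_neg, neg_neg, ← Finset.sum_neg_distrib,
    ← Finset.sum_add_distrib]
  refine Finset.sum_congr rfl fun ω _ => ?_
  rcases (hμ ω).eq_or_lt with h0 | hpos
  · simp [← h0]
  have := pmfOf_pos_of_pos μ hμ X hpos
  have := pmfOf_pos_of_pos μ hμ Y hpos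
  have := pmfOf_pos_of_pos μ hμ (fun ω => (X ω, Y ω)) hpos
  rw [Real.log_div (by positivity) (by positivity), Real.log_mul (by positivity) (by positivity)]
  ring

lemma cmi_eq_entropy [Fintype α] [Fintype β] [Fintype γ] (X : Ω → α) (Y : Ω → β) (Z : Ω → γ) :
    cmi μ X Y Z = entropy μ (fun ω => (X ω, Z ω)) + entropy μ (fun ω => (Y ω, Z ω))
      - entropy μ (fun ω => (X ω, Y ω, Z ω)) - entropy μ Z := by
  have lotus := sum_pmfOf_mul μ (fun ω => (X ω, Y ω, Z ω))
    fun t => Real.log (pmfOf μ (fun ω => (X ω, Y ω, Z ω)) t * pmfOf μ Z t.2.2 /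
      (pmfOf μ (fun ω => (X ω, Z ω)) (t.1, t.2.2) * pmfOf μ (fun ω => (Y ω, Z ω)) t.2))
  simp only [Fintype.sum_prod_type] at lotus
  rw [cmi, lotus]
  simp only [entropy, sub_eq_add_neg, neg_neg, ← Finset.sum_neg_distrib,
    ← Finset.sum_add_distrib]
  refine Finset.sum_congr rfl fun ω _ => ?_
  rcases (hμ ω).eq_or_lt with h0 | hpos
  · simp [← h0]
  have := pmfOf_pos_of_pos μ hμ Z hpos
  have := pmfOf_pos_of_pos μ hμ (fun ω => (X ω, Z ω)) hpos
  have := pmfOf_pos_of_pos μ hμ (fun ω => (Y ω, Z ω)) hpos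
  have := pmfOf_pos_of_pos μ hμ (fun ω => (X ω, Y ω, Z ω)) hpos
  rw [Real.log_div (by positivity) (by positivity), Real.log_mul (by positivity) (by positivity),
    Real.log_mul (by positivity) (by positivity)]
  ring

end Entropy

lemma sub_le_mul_log_div {p t : ℝ} (hp : 0 ≤ p) (ht : 0 ≤ t) (hpt : 0 < p → 0 < t) :
    p - t ≤ p * Real.log (p / t) := by
  rcases hp.eq_or_lt with rfl | hp
  · simpa using ht
  have ht := hpt hp
  calc p - t = p * (1 - (p / t)⁻¹) := by field_simp
    _ ≤ p * Real.log (p / t) :=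
      mul_le_mul_of_nonneg_left (Real.one_sub_inv_le_log_of_pos (by positivity)) hp.le

section Information

variable {Ω α β γ δ : Type} [Fintype Ω] [Fintype α] [DecidableEq α] [Fintype β] [DecidableEq β]
  [Fintype γ] [DecidableEq γ] [Fintype δ] [DecidableEq δ] (μ : Ω → ℝ) (hμ : ∀ ω, 0 ≤ μ ω)
include hμ

lemma cmi_nonneg (X : Ω → α) (Y : Ω → β) (Z : Ω → γ) :
    0 ≤ cmi μ X Y Z := by
  let p a b c := pmfOf μ (fun ω => (X ω, Y ω, Z ω)) (a, b, c)
  let r a c := pmfOf μ (fun ω => (X ω, Z ω)) (a, c)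
  let s b c := pmfOf μ (fun ω => (Y ω, Z ω)) (b, c)
  let q c := pmfOf μ Z c
  have gibbs (a : α) (b : β) (c : γ) :
      p a b c - r a c * s b c / q c ≤ p a b c * Real.log (p a b c * q c / (r a c * s b c)) := by
    rw [← div_div_eq_mul_div (p a b c)]
    have hrsq : 0 ≤ r a c * s b c / q c := div_nonneg
      (mul_nonneg (pmfOf_nonneg μ hμ _ _) (pmfOf_nonneg μ hμ _ _)) (pmfOf_nonneg μ hμ _ _)
    refine sub_le_mul_log_div (pmfOf_nonneg μ hμ (fun ω => (X ω, Y ω, Z ω)) _) hrsq fun hpos => ?_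
    obtain ⟨ω, hω, hμω⟩ := exists_pos_of_pmfOf_pos μ hpos
    simp only [Prod.mk.injEq] at hω
    obtain ⟨rfl, rfl, rfl⟩ := hω
    have := pmfOf_pos_of_pos μ hμ Z hμω
    have := pmfOf_pos_of_pos μ hμ (fun ω => (X ω, Z ω)) hμω
    have := pmfOf_pos_of_pos μ hμ (fun ω => (Y ω, Z ω)) hμω
    positivity
  have sum_p : ∑ a, ∑ b, ∑ c, p a b c = ∑ ω, μ ω := by
    simp only [p, ← sum_pmfOf μ (fun ω => (X ω, Y ω, Z ω)), Fintype.sum_prod_type]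
  have sum_rsq : ∑ a, ∑ b, ∑ c, r a c * s b c / q c = ∑ ω, μ ω := by
    rw [Finset.sum_comm, Finset.sum_congr rfl fun b _ => Finset.sum_comm, Finset.sum_comm,
      ← sum_pmfOf μ Z]
    refine Finset.sum_congr rfl fun c _ => ?_
    simp only [← Finset.sum_div, ← Finset.sum_mul, ← Finset.mul_sum, r, s, q, sum_pmfOf_pair,
      mul_self_div_self]
  calc 0 = ∑ a, ∑ b, ∑ c, (p a b c - r a c * s b c / q c) := by
        simp only [Finset.sum_sub_distrib, sum_p, sum_rsq, sub_self]
    _ ≤ cmi μ X Y Z :=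
        Finset.sum_le_sum fun a _ => Finset.sum_le_sum fun b _ =>
          Finset.sum_le_sum fun c _ => gibbs a b c

lemma mi_comm (X : Ω → α) (Y : Ω → β) : mi μ X Y = mi μ Y X := by
  rw [mi_eq_entropy μ hμ, mi_eq_entropy μ hμ,
    entropy_congr μ (X := fun ω => (X ω, Y ω)) (Y := fun ω => (Y ω, X ω))
      fun _ _ => by simp only [Prod.mk.injEq]; tauto]
  ring

lemma cmi_comm (X : Ω → α) (Y : Ω → β) (Z : Ω → γ) : cmi μ X Y Z = cmi μ Y X Z := by
  rw [cmi_eq_entropy μ hμ, cmi_eq_entropy μ hμ,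
    entropy_congr μ (X := fun ω => (X ω, Y ω, Z ω)) (Y := fun ω => (Y ω, X ω, Z ω))
      fun _ _ => by simp only [Prod.mk.injEq]; tauto]
  ring

lemma cmi_pair_eq_add (X : Ω → α) (W : Ω → δ) (Y : Ω → β) (Z : Ω → γ) :
    cmi μ X (fun ω => (W ω, Y ω)) Z = cmi μ X W Z + cmi μ X Y (fun ω => (W ω, Z ω)) := by
  simp only [cmi_eq_entropy μ hμ]
  rw [entropy_congr μ (X := fun ω => ((W ω, Y ω), Z ω)) (Y := fun ω => (Y ω, W ω, Z ω))
      fun _ _ => by simp only [Prod.mk.injEq]; tauto,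
    entropy_congr μ (X := fun ω => (X ω, (W ω, Y ω), Z ω)) (Y := fun ω => (X ω, Y ω, W ω, Z ω))
      fun _ _ => by simp only [Prod.mk.injEq]; tauto]
  ring

lemma cmi_eq_zero_of_comp (X : Ω → α) (Z : Ω → γ) (k : γ → β) :
    cmi μ X (fun ω => k (Z ω)) Z = 0 := by
  rw [cmi_eq_entropy μ hμ,
    entropy_congr μ (X := fun ω => (k (Z ω), Z ω)) (Y := Z) fun _ _ => by
      simp only [Prod.mk.injEq]
      exact ⟨And.right, fun h => ⟨congrArg k h, h⟩⟩,
    entropy_congr μ (X := fun ω => (X ω, k (Z ω), Z ω)) (Y := fun ω => (X ω, Z ω)) fun _ _ => by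
      simp only [Prod.mk.injEq]
      exact ⟨fun h => ⟨h.1, h.2.2⟩, fun h => ⟨h.1, congrArg k h.2, h.2⟩⟩]
  ring

lemma cmi_pair_comm (X : Ω → α) (W : Ω → δ) (Y : Ω → β) (Z : Ω → γ) :
    cmi μ X (fun ω => (W ω, Y ω)) Z = cmi μ X (fun ω => (Y ω, W ω)) Z := by
  simp only [cmi_eq_entropy μ hμ]
  rw [entropy_congr μ (X := fun ω => ((W ω, Y ω), Z ω)) (Y := fun ω => ((Y ω, W ω), Z ω))
      fun _ _ => by simp only [Prod.mk.injEq]; tauto,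
    entropy_congr μ (X := fun ω => (X ω, (W ω, Y ω), Z ω)) (Y := fun ω => (X ω, (Y ω, W ω), Z ω))
      fun _ _ => by simp only [Prod.mk.injEq]; tauto]

lemma cmi_comp_le (U : Ω → α) (V : Ω → δ) (Z : Ω → γ) (k : γ → δ → β) :
    cmi μ U (fun ω => k (Z ω) (V ω)) Z ≤ cmi μ U V Z := by
  have hdet : cmi μ U (fun ω => k (Z ω) (V ω)) (fun ω => (V ω, Z ω)) = 0 :=
    cmi_eq_zero_of_comp μ hμ U (fun ω => (V ω, Z ω)) fun p => k p.2 p.1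
  have hVK := cmi_pair_eq_add μ hμ U V (fun ω => k (Z ω) (V ω)) Z
  have hKV := cmi_pair_eq_add μ hμ U (fun ω => k (Z ω) (V ω)) V Z
  rw [cmi_pair_comm μ hμ, hKV, hdet] at hVK
  linarith [cmi_nonneg μ hμ U V fun ω => (k (Z ω) (V ω), Z ω)]

lemma mi_eq_mi_add_cmi_of_cmi_eq_zero {U : Ω → α} {V : Ω → β} {W : Ω → γ}
    (h : cmi μ U W V = 0) : mi μ U V = mi μ U W + cmi μ U V W := by
  rw [cmi_eq_entropy μ hμ,
    entropy_congr μ (X := fun ω => (W ω, V ω)) (Y := fun ω => (V ω, W ω))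
      fun _ _ => by simp only [Prod.mk.injEq]; tauto,
    entropy_congr μ (X := fun ω => (U ω, W ω, V ω)) (Y := fun ω => (U ω, V ω, W ω))
      fun _ _ => by simp only [Prod.mk.injEq]; tauto] at h
  simp only [mi_eq_entropy μ hμ, cmi_eq_entropy μ hμ]
  linarith

end Information

section Independence

variable {Ω α β γ δ : Type} [Fintype Ω] [Fintype α] [DecidableEq α] [Fintype β] [DecidableEq β]
  [Fintype γ] [DecidableEq γ] [Fintype δ] [DecidableEq δ] (μ : Ω → ℝ)

lemma indepRV_comp {X : Ω → α} {Y : Ω → β} (h : IndepRV μ X Y) (φ : α → γ) (ψ : β → δ) :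
    IndepRV μ (fun ω => φ (X ω)) (fun ω => ψ (Y ω)) := by
  intro c d
  calc pmfOf μ (fun ω => (φ (X ω), ψ (Y ω))) (c, d)
      = ∑ t, pmfOf μ (fun ω => (X ω, Y ω)) t * if Prod.map φ ψ t = (c, d) then 1 else 0 :=
        pmfOf_comp μ (fun ω => (X ω, Y ω)) (Prod.map φ ψ) (c, d)
    _ = ∑ a, ∑ b, (pmfOf μ X a * if φ a = c then 1 else 0) *
          (pmfOf μ Y b * if ψ b = d then 1 else 0) := by
        rw [Fintype.sum_prod_type]
        refine Finset.sum_congr rfl fun a _ => Finset.sum_congr rfl fun b _ => ?_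
        rw [h a b]
        by_cases hc : φ a = c <;> by_cases hd : ψ b = d <;> simp [hc, hd]
    _ = pmfOf μ (fun ω => φ (X ω)) c * pmfOf μ (fun ω => ψ (Y ω)) d := by
        rw [pmfOf_comp, pmfOf_comp, Finset.sum_mul_sum]

lemma indepRV_of_pmfOf_pair_eq_mul (hμ : ∑ ω, μ ω = 1) {X : Ω → α} {Y : Ω → β} (v : β → ℝ)
    (h : ∀ a b, pmfOf μ (fun ω => (X ω, Y ω)) (a, b) = pmfOf μ X a * v b) : IndepRV μ X Y := by
  have hv (b : β) : pmfOf μ Y b = v b := by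
    rw [← sum_pmfOf_pair μ X Y b]
    simp only [h, ← Finset.sum_mul, sum_pmfOf, hμ, one_mul]
  intro a b
  rw [h, hv]

lemma entropy_pair_of_indepRV (hμ : ∀ ω, 0 ≤ μ ω) {X : Ω → α} {Y : Ω → β} (h : IndepRV μ X Y) :
    entropy μ (fun ω => (X ω, Y ω)) = entropy μ X + entropy μ Y := by
  simp only [entropy, h _ _, ← neg_add, ← Finset.sum_add_distrib]
  congr 1
  refine Finset.sum_congr rfl fun ω _ => ?_
  rcases (hμ ω).eq_or_lt with h0 | hpos
  · simp [← h0]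
  rw [Real.log_mul (pmfOf_pos_of_pos μ hμ X hpos).ne' (pmfOf_pos_of_pos μ hμ Y hpos).ne']
  ring

lemma cmi_eq_zero_of_indepRV (hμ : ∀ ω, 0 ≤ μ ω) {N : Ω → γ} {X : Ω → α} {Y : Ω → β}
    (h : IndepRV μ N fun ω => (X ω, Y ω)) : cmi μ Y N X = 0 := by
  have hNX : IndepRV μ N X := indepRV_comp μ h id Prod.fst
  rw [cmi_eq_entropy μ hμ, entropy_pair_of_indepRV μ hμ hNX,
    entropy_congr μ (X := fun ω => (Y ω, N ω, X ω)) (Y := fun ω => (N ω, X ω, Y ω))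
      fun _ _ => by simp only [Prod.mk.injEq]; tauto,
    entropy_pair_of_indepRV μ hμ h,
    entropy_congr μ (X := fun ω => (X ω, Y ω)) (Y := fun ω => (Y ω, X ω))
      fun _ _ => by simp only [Prod.mk.injEq]; tauto]
  ring

lemma cmi_comp_eq_zero_of_indepRV (hμ : ∀ ω, 0 ≤ μ ω) {N : Ω → γ} {X : Ω → α} {Y : Ω → β}
    (h : IndepRV μ N fun ω => (X ω, Y ω)) (k : α → γ → δ) :
    cmi μ Y (fun ω => k (X ω) (N ω)) X = 0 :=
  le_antisymm ((cmi_comp_le μ hμ Y N X k).trans (cmi_eq_zero_of_indepRV μ hμ h).le)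
    (cmi_nonneg μ hμ _ _ _)

lemma indepRV_of_pmfOf_eq_mul_mul_mul (hμ : ∑ ω, μ ω = 1)
    {N₁ : Ω → α} {N₂ : Ω → β} {N₃ : Ω → γ} {W : Ω → δ}
    (h : ∀ a b c d, pmfOf μ (fun ω => (N₁ ω, N₂ ω, N₃ ω, W ω)) (a, b, c, d)
      = pmfOf μ N₁ a * pmfOf μ N₂ b * pmfOf μ N₃ c * pmfOf μ W d) :
    (IndepRV μ N₁ fun ω => (N₂ ω, N₃ ω, W ω)) ∧ (IndepRV μ N₂ fun ω => (N₁ ω, N₃ ω, W ω)) ∧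
      (IndepRV μ N₃ fun ω => (N₁ ω, N₂ ω, W ω)) := by
  refine ⟨?_, ?_, ?_⟩
  · refine indepRV_of_pmfOf_pair_eq_mul μ hμ
      (fun r => pmfOf μ N₂ r.1 * pmfOf μ N₃ r.2.1 * pmfOf μ W r.2.2) fun a ⟨b, c, d⟩ => ?_
    rw [h]
    ring
  · refine indepRV_of_pmfOf_pair_eq_mul μ hμ
      (fun r => pmfOf μ N₁ r.1 * pmfOf μ N₃ r.2.1 * pmfOf μ W r.2.2) fun b ⟨a, c, d⟩ => ?_
    rw [pmfOf_congr μ (Y := fun ω => (N₁ ω, N₂ ω, N₃ ω, W ω)) (b := (a, b, c, d))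
      fun ω => by simp only [Prod.mk.injEq]; tauto, h]
    ring
  · refine indepRV_of_pmfOf_pair_eq_mul μ hμ
      (fun r => pmfOf μ N₁ r.1 * pmfOf μ N₂ r.2.1 * pmfOf μ W r.2.2) fun c ⟨a, b, d⟩ => ?_
    rw [pmfOf_congr μ (Y := fun ω => (N₁ ω, N₂ ω, N₃ ω, W ω)) (b := (a, b, c, d))
      fun ω => by simp only [Prod.mk.injEq]; tauto, h]
    ring

end Independence

section Sufficiency

variable {Ω α β γ δ κ : Type} [Fintype Ω] [Fintype α] [DecidableEq α] [Fintype β]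
  [DecidableEq β] [Fintype γ] [DecidableEq γ] [Fintype δ] [DecidableEq δ] [Fintype κ]
  [DecidableEq κ] (μ : Ω → ℝ) (hμ : ∀ ω, 0 ≤ μ ω)
include hμ

theorem cmi_eq_zero_of_mi_eq_mi {x : Ω → α} {x' : Ω → β} {z : Ω → γ} {z' : Ω → δ}
    (hz : cmi μ z z' x' = 0) (hx : cmi μ x' z x = 0) (hmi : mi μ x x' = mi μ z z') :
    cmi μ x x' z = 0 := by
  have hzx' := mi_eq_mi_add_cmi_of_cmi_eq_zero μ hμ hz
  have hx'x := mi_eq_mi_add_cmi_of_cmi_eq_zero μ hμ hx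
  rw [mi_comm μ hμ x', mi_comm μ hμ x'] at hx'x
  rw [cmi_comm μ hμ]
  linarith [cmi_nonneg μ hμ z x' z', cmi_nonneg μ hμ x' x z]

theorem mi_eq_mi_of_cmi_eq_zero {x : Ω → α} {x' : Ω → β} {z : Ω → γ} {ε : Ω → δ}
    (f : β → δ → κ) (hxz : cmi μ x x' z = 0) (hε : cmi μ x ε (fun ω => (x' ω, z ω)) = 0)
    (hy : cmi μ (fun ω => f (x' ω) (ε ω)) z x = 0) :
    mi μ x (fun ω => f (x' ω) (ε ω)) = mi μ z fun ω => f (x' ω) (ε ω) := by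
  have hxy : cmi μ x (fun ω => f (x' ω) (ε ω)) z = 0 := by
    refine le_antisymm ?_ (cmi_nonneg μ hμ _ _ _)
    calc cmi μ x (fun ω => f (x' ω) (ε ω)) z ≤ cmi μ x (fun ω => (x' ω, ε ω)) z :=
          cmi_comp_le μ hμ x (fun ω => (x' ω, ε ω)) z fun _ p => f p.1 p.2
      _ = 0 := by rw [cmi_pair_eq_add μ hμ, hxz, hε, add_zero]
  rw [mi_comm μ hμ x, mi_comm μ hμ z, mi_eq_mi_add_cmi_of_cmi_eq_zero μ hμ hy, cmi_comm μ hμ,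
    hxy, add_zero]

end Sufficiency

/-- **Autoinformation preservation implies sufficiency**: if the representation
`z_t = g(x_t, ε₁)`, `z_{t+τ} = g(x_{t+τ}, ε₂)` preserves autoinformation at lag `τ`
(`I(x_t; x_{t+τ}) = I(z_t; z_{t+τ})`, i.e. `AIG(z_t; τ) = 0`), then `z_t` is sufficient for
every noisy function `y_{t+τ} = f(x_{t+τ}, ε₃)` of the future state:
`I(x_t; y_{t+τ}) = I(z_t; y_{t+τ})`. All noise variables are mutually independent and
independent of the process `(x_t, x_{t+τ})`. -/
theorem sufficiency_of_autoinfo_preservation {Ω A E E' Z B : Type} [Fintype Ω]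
    [Fintype A] [DecidableEq A] [Fintype E] [DecidableEq E] [Fintype E'] [DecidableEq E']
    [Fintype Z] [DecidableEq Z] [Fintype B] [DecidableEq B]
    (μ : Ω → ℝ) (hμ : IsPMF μ)
    (x x' : Ω → A) (ε₁ ε₂ : Ω → E) (ε₃ : Ω → E')
    (g : A → E → Z) (f : A → E' → B)
    (hIndep : ∀ (e₁ e₂ : E) (e₃ : E') (a a' : A),
      pmfOf μ (fun ω => (ε₁ ω, ε₂ ω, ε₃ ω, x ω, x' ω)) (e₁, e₂, e₃, a, a')
        = pmfOf μ ε₁ e₁ * pmfOf μ ε₂ e₂ * pmfOf μ ε₃ e₃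
          * pmfOf μ (fun ω => (x ω, x' ω)) (a, a'))
    (hAIG : mi μ x x' = mi μ (fun ω => g (x ω) (ε₁ ω)) (fun ω => g (x' ω) (ε₂ ω))) :
    mi μ x (fun ω => f (x' ω) (ε₃ ω))
      = mi μ (fun ω => g (x ω) (ε₁ ω)) (fun ω => f (x' ω) (ε₃ ω)) := by
  obtain ⟨hμ₀, hμ₁⟩ := hμ
  obtain ⟨hε₁, hε₂, hε₃⟩ := indepRV_of_pmfOf_eq_mul_mul_mul μ hμ₁ (W := fun ω => (x ω, x' ω))
    fun e₁ e₂ e₃ ⟨a, a'⟩ => hIndep e₁ e₂ e₃ a a'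
  have hzz' : cmi μ (fun ω => g (x ω) (ε₁ ω)) (fun ω => g (x' ω) (ε₂ ω)) x' = 0 :=
    cmi_comp_eq_zero_of_indepRV μ hμ₀ (indepRV_comp μ hε₂ id fun r => (r.2.2.2, g r.2.2.1 r.1)) g
  have hx'z : cmi μ x' (fun ω => g (x ω) (ε₁ ω)) x = 0 :=
    cmi_comp_eq_zero_of_indepRV μ hμ₀ (indepRV_comp μ hε₁ id fun r => r.2.2) g
  have hyz : cmi μ (fun ω => f (x' ω) (ε₃ ω)) (fun ω => g (x ω) (ε₁ ω)) x = 0 :=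
    cmi_comp_eq_zero_of_indepRV μ hμ₀
      (indepRV_comp μ hε₁ id fun r => (r.2.2.1, f r.2.2.2 r.2.1)) g
  have hε₃z : cmi μ x ε₃ (fun ω => (x' ω, g (x ω) (ε₁ ω))) = 0 :=
    cmi_eq_zero_of_indepRV μ hμ₀
      (indepRV_comp μ hε₃ id fun r => ((r.2.2.2, g r.2.2.1 r.1), r.2.2.1))
  exact mi_eq_mi_of_cmi_eq_zero μ hμ₀ f (cmi_eq_zero_of_mi_eq_mi μ hμ₀ hzz' hx'z hAIG) hε₃z hyz
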